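/- arXiv:2107.00273 — 5 statements merged into one kernel-verified Lean document; each statement's English description precedes it below -/
import Mathlib

section
/- Let θ > 0 and let ψ : ℝ → ℝ be positive and twice differentiable on [0, T] and satisfy ψ''(t)·ψ(t) − (1+θ)·(ψ'(t))² ≥ 0 for all t ∈ [0, T], with ψ(0) > 0 and ψ'(0) > 0. Then T < ψ(0)/(θ·ψ'(0)); equivalently, ψ(t)^{−θ} ≤ ψ(0)^{−θ} − θ·ψ'(0)·ψ(0)^{−θ−1}·t for all t ∈ [0, T], so ψ must blow up (tend to +∞) at some time t₁ ≤ ψ(0)/(θ·ψ'(0)). -/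
/-!
With `F = ψ ^ (-θ)` one has `F'' = -θ ψ ^ (-θ - 2) (ψ'' ψ - (1 + θ) ψ'²) ≤ 0`, so `F` is concave
and lies below its tangent line at `0`. As `F > 0`, that line, which vanishes at
`ψ 0 / (θ ψ'(0))`, is still positive at `T`.
-/

theorem ConcaveOn.le_add_mul_sub_of_hasDerivAt {S : Set ℝ} {f : ℝ → ℝ} {x y f' : ℝ}
    (hfc : ConcaveOn ℝ S f) (hx : x ∈ S) (hy : y ∈ S) (hf' : HasDerivAt f f' x) :
    f y ≤ f x + f' * (y - x) := by
  rcases lt_trichotomy x y with hxy | rfl | hyx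
  · have h := hfc.slope_le_of_hasDerivAt hx hy hxy hf'
    rw [slope_def_field, div_le_iff₀ (sub_pos.2 hxy)] at h
    linarith
  · simp
  · have h := hfc.le_slope_of_hasDerivAt hy hx hyx hf'
    rw [slope_def_field, le_div_iff₀ (sub_pos.2 hyx)] at h
    linarith

theorem hasDerivAt_deriv_mul_rpow {ψ : ℝ → ℝ} {t ψ'' : ℝ} (p : ℝ) (hψ : ψ t ≠ 0)
    (h1 : DifferentiableAt ℝ ψ t) (h2 : HasDerivAt (deriv ψ) ψ'' t) :
    HasDerivAt (fun s ↦ deriv ψ s * p * ψ s ^ (p - 1))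
      (p * ψ t ^ (p - 2) * (ψ'' * ψ t + (p - 1) * deriv ψ t ^ 2)) t := by
  refine ((h2.mul_const p).mul (h1.hasDerivAt.rpow_const (p := p - 1) (Or.inl hψ))).congr_deriv ?_
  rw [show p - 1 = p - 2 + 1 by ring, Real.rpow_add_one hψ, show p - 2 + 1 - 1 = p - 2 by ring]
  ring

theorem concaveOn_rpow_neg {D : Set ℝ} (hD : Convex ℝ D) {θ : ℝ} (hθ : 0 ≤ θ) {ψ : ℝ → ℝ}
    (hpos : ∀ t ∈ D, 0 < ψ t)
    (hdiff1 : ∀ t ∈ D, DifferentiableAt ℝ ψ t)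
    (hdiff2 : ∀ t ∈ D, DifferentiableAt ℝ (deriv ψ) t)
    (hineq : ∀ t ∈ D, 0 ≤ deriv (deriv ψ) t * ψ t - (1 + θ) * deriv ψ t ^ 2) :
    ConcaveOn ℝ D fun t ↦ ψ t ^ (-θ) := by
  have hF' : ∀ t ∈ D, HasDerivAt (fun s ↦ ψ s ^ (-θ)) (deriv ψ t * -θ * ψ t ^ (-θ - 1)) t :=
    fun t ht ↦ (hdiff1 t ht).hasDerivAt.rpow_const (Or.inl (hpos t ht).ne')
  have hF'' : ∀ t ∈ D, HasDerivAt (fun s ↦ deriv ψ s * -θ * ψ s ^ (-θ - 1))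
      (-θ * ψ t ^ (-θ - 2) * (deriv (deriv ψ) t * ψ t + (-θ - 1) * deriv ψ t ^ 2)) t :=
    fun t ht ↦ hasDerivAt_deriv_mul_rpow (-θ) (hpos t ht).ne' (hdiff1 t ht)
      (hdiff2 t ht).hasDerivAt
  refine concaveOn_of_hasDerivWithinAt2_nonpos hD
    (fun t ht ↦ (hF' t ht).continuousAt.continuousWithinAt)
    (fun t ht ↦ (hF' t (interior_subset ht)).hasDerivWithinAt)
    (fun t ht ↦ (hF'' t (interior_subset ht)).hasDerivWithinAt) fun t ht ↦ ?_
  have hψ := hpos t (interior_subset ht)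
  have hbracket : 0 ≤ deriv (deriv ψ) t * ψ t + (-θ - 1) * deriv ψ t ^ 2 := by
    linarith [hineq t (interior_subset ht)]
  have := mul_nonneg (by positivity : 0 ≤ θ * ψ t ^ (-θ - 2)) hbracket
  linarith

theorem levine_concavity_general (θ T : ℝ) (hθ : 0 < θ) (hT : 0 ≤ T) (ψ : ℝ → ℝ)
    (hpos : ∀ t ∈ Set.Icc (0 : ℝ) T, 0 < ψ t)
    (hdiff1 : ∀ t ∈ Set.Icc (0 : ℝ) T, DifferentiableAt ℝ ψ t)
    (hdiff2 : ∀ t ∈ Set.Icc (0 : ℝ) T, DifferentiableAt ℝ (deriv ψ) t)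
    (hineq : ∀ t ∈ Set.Icc (0 : ℝ) T,
      0 ≤ deriv (deriv ψ) t * ψ t - (1 + θ) * (deriv ψ t) ^ 2)
    (hψ'0 : 0 < deriv ψ 0) :
    (∀ t ∈ Set.Icc (0 : ℝ) T,
      (ψ t) ^ (-θ) ≤ (ψ 0) ^ (-θ) - θ * deriv ψ 0 * (ψ 0) ^ (-θ - 1) * t) ∧
    T < ψ 0 / (θ * deriv ψ 0) := by
  have h0 : (0 : ℝ) ∈ Set.Icc 0 T := ⟨le_rfl, hT⟩
  have hψ0 := hpos 0 h0
  have hconcave := concaveOn_rpow_neg (convex_Icc 0 T) hθ.le hpos hdiff1 hdiff2 hineq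
  have htangent : ∀ t ∈ Set.Icc (0 : ℝ) T,
      (ψ t) ^ (-θ) ≤ (ψ 0) ^ (-θ) - θ * deriv ψ 0 * (ψ 0) ^ (-θ - 1) * t := by
    intro t ht
    have := hconcave.le_add_mul_sub_of_hasDerivAt h0 ht
      ((hdiff1 0 h0).hasDerivAt.rpow_const (Or.inl hψ0.ne'))
    linarith
  refine ⟨htangent, ?_⟩
  have hline : 0 < ψ 0 ^ (-θ - 1) * (ψ 0 - θ * deriv ψ 0 * T) := by
    have hT' := htangent T ⟨hT, le_rfl⟩
    have : ψ 0 ^ (-θ) = ψ 0 ^ (-θ - 1) * ψ 0 := by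
      rw [← Real.rpow_add_one hψ0.ne', sub_add_cancel]
    nlinarith [Real.rpow_pos_of_pos (hpos T ⟨hT, le_rfl⟩) (-θ)]
  rw [lt_div_iff₀ (by positivity)]
  linarith [pos_of_mul_pos_right hline (Real.rpow_pos_of_pos hψ0 _).le]

/-- Levine's concavity lemma: if a positive, twice-differentiable function `ψ` on `[0, T]`
satisfies `ψ'' ψ - (1+θ) ψ'² ≥ 0` with `ψ 0 > 0` and `ψ' 0 > 0`, then
`ψ t ^ (-θ) ≤ ψ 0 ^ (-θ) - θ ψ'(0) ψ(0)^(-θ-1) t` on `[0, T]`, and in particular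
`T < ψ 0 / (θ * ψ' 0)`. -/
theorem levine_concavity (θ T : ℝ) (hθ : 0 < θ) (hT : 0 ≤ T) (ψ : ℝ → ℝ)
    (hpos : ∀ t ∈ Set.Icc (0 : ℝ) T, 0 < ψ t)
    (hdiff1 : ∀ t ∈ Set.Icc (0 : ℝ) T, DifferentiableAt ℝ ψ t)
    (hdiff2 : ∀ t ∈ Set.Icc (0 : ℝ) T, DifferentiableAt ℝ (deriv ψ) t)
    (hineq : ∀ t ∈ Set.Icc (0 : ℝ) T,
      0 ≤ deriv (deriv ψ) t * ψ t - (1 + θ) * (deriv ψ t) ^ 2)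
    (hψ0 : 0 < ψ 0) (hψ'0 : 0 < deriv ψ 0) :
    (∀ t ∈ Set.Icc (0 : ℝ) T,
      (ψ t) ^ (-θ) ≤ (ψ 0) ^ (-θ) - θ * deriv ψ 0 * (ψ 0) ^ (-θ - 1) * t) ∧
    T < ψ 0 / (θ * deriv ψ 0) :=
  levine_concavity_general θ T hθ hT ψ hpos hdiff1 hdiff2 hineq hψ'0
end

section
/- Let p⁻, p⁺ be real numbers with 2 < p⁻ ≤ p⁺ and let B₁ ≥ 1. Define G : (0, ∞) → ℝ by G(α) = α/(2B₁²) − (1/p⁻)·max{α^{p⁺/2}, α^{p⁻/2}}, and set α₁ = (B₁²)^{−2/(p⁻−2)}. Then G is strictly increasing on the interval (0, α₁] and strictly decreasing on the interval [α₁, ∞). -/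
/-!
Put `e = p⁻/2` and `b = B₁²`, so that `α₁ ^ (e - 1) = b⁻¹`. Then `G = h / 2 - φ / p⁻` on
`(0, ∞)`, where `h α = α₁ ^ (e - 1) α - α ^ e / e` has derivative `α₁ ^ (e - 1) - α ^ (e - 1)`,
so `h` increases up to `α₁` and decreases after it, while `φ α = max (α ^ (p⁺/2)) (α ^ e) - α ^ e`
is monotone and vanishes on `(0, 1] ⊇ (0, α₁]`.
-/

open Set Real

section MulSubRpowDiv

variable {e : ℝ}

theorem hasDerivAt_mul_sub_rpow_div (a : ℝ) {x : ℝ} (he : e ≠ 0) (hx : 0 < x) :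
    HasDerivAt (fun x => a ^ (e - 1) * x - x ^ e / e) (a ^ (e - 1) - x ^ (e - 1)) x := by
  have hpow := (hasDerivAt_rpow_const (p := e) (Or.inl hx.ne')).div_const e
  rw [mul_div_cancel_left₀ _ he] at hpow
  have hlin : HasDerivAt (fun x => a ^ (e - 1) * x) (a ^ (e - 1)) x := by
    simpa using (hasDerivAt_id x).const_mul (a ^ (e - 1))
  exact hlin.sub hpow

theorem continuous_mul_sub_rpow_div (a : ℝ) (he : 0 ≤ e) :
    Continuous fun x => a ^ (e - 1) * x - x ^ e / e := by
  have := continuous_rpow_const he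
  fun_prop

theorem strictMonoOn_mul_sub_rpow_div {a : ℝ} (he : 1 < e) :
    StrictMonoOn (fun x => a ^ (e - 1) * x - x ^ e / e) (Icc 0 a) := by
  refine strictMonoOn_of_deriv_pos (convex_Icc 0 a)
    (continuous_mul_sub_rpow_div a (by linarith)).continuousOn fun x hx => ?_
  rw [interior_Icc] at hx
  rw [(hasDerivAt_mul_sub_rpow_div a (by linarith) hx.1).deriv, sub_pos]
  exact rpow_lt_rpow hx.1.le hx.2 (by linarith)

theorem strictAntiOn_mul_sub_rpow_div {a : ℝ} (ha : 0 ≤ a) (he : 1 < e) :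
    StrictAntiOn (fun x => a ^ (e - 1) * x - x ^ e / e) (Ici a) := by
  refine strictAntiOn_of_deriv_neg (convex_Ici a)
    (continuous_mul_sub_rpow_div a (by linarith)).continuousOn fun x hx => ?_
  rw [interior_Ici] at hx
  rw [(hasDerivAt_mul_sub_rpow_div a (by linarith) (ha.trans_lt hx)).deriv, sub_neg]
  exact rpow_lt_rpow ha hx (by linarith)

end MulSubRpowDiv

theorem max_rpow_sub_rpow_eq_zero {p q x : ℝ} (hpq : p ≤ q) (hx : 0 < x) (hx1 : x ≤ 1) :
    max (x ^ q) (x ^ p) - x ^ p = 0 := by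
  rw [max_eq_right (rpow_le_rpow_of_exponent_ge hx hx1 hpq), sub_self]

theorem monotoneOn_max_rpow_sub_rpow {p q : ℝ} (hp : 0 ≤ p) (hpq : p ≤ q) :
    MonotoneOn (fun x : ℝ => max (x ^ q) (x ^ p) - x ^ p) (Ioi 0) := by
  intro x hx y hy hxy
  dsimp only
  rcases le_total x 1 with hx1 | hx1
  · rw [max_rpow_sub_rpow_eq_zero hpq hx hx1, sub_nonneg]
    exact le_max_right _ _
  have hy1 : 1 ≤ y := hx1.trans hxy
  rw [max_eq_left (rpow_le_rpow_of_exponent_le hx1 hpq),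
    max_eq_left (rpow_le_rpow_of_exponent_le hy1 hpq)]
  -- `x ^ q - x ^ p = x ^ p (x ^ (q - p) - 1)` is a product of monotone nonnegative factors
  have hsplit : ∀ z : ℝ, 0 < z → z ^ q - z ^ p = z ^ p * (z ^ (q - p) - 1) := fun z hz => by
    rw [mul_sub, mul_one, ← rpow_add hz, add_sub_cancel]
  rw [hsplit x hx, hsplit y hy]
  gcongr
  exact sub_nonneg.2 (one_le_rpow hx1 (sub_nonneg.2 hpq))

theorem rpow_rpow_neg_two_div_sub_two {b p : ℝ} (hb : 0 ≤ b) (hp : 2 < p) :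
    (b ^ (-2 / (p - 2))) ^ (p / 2 - 1) = b⁻¹ := by
  rw [← rpow_mul hb, ← rpow_neg_one]
  congr 1
  field_simp [show p - 2 ≠ 0 by linarith]

/-- The function `G(α) = α/(2B₁²) − (1/p⁻)·max{α^{p⁺/2}, α^{p⁻/2}}` is strictly increasing
on `(0, α₁]` and strictly decreasing on `[α₁, ∞)`, where `α₁ = (B₁²)^{−2/(p⁻−2)}`. -/
theorem G_monotonicity (pm pp B₁ α₁ : ℝ) (G : ℝ → ℝ)
    (hpm : 2 < pm) (hpmpp : pm ≤ pp) (hB₁ : 1 ≤ B₁)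
    (hG : ∀ α, G α = α / (2 * B₁ ^ 2) - (1 / pm) * max (α ^ (pp / 2)) (α ^ (pm / 2)))
    (hα₁ : α₁ = (B₁ ^ 2) ^ (-2 / (pm - 2))) :
    StrictMonoOn G (Set.Ioc 0 α₁) ∧ StrictAntiOn G (Set.Ici α₁) := by
  have hb : 1 ≤ B₁ ^ 2 := one_le_pow₀ hB₁
  have hα₁_pos : 0 < α₁ := hα₁ ▸ rpow_pos_of_pos (by linarith) _
  have hα₁_le_one : α₁ ≤ 1 :=
    hα₁ ▸ rpow_le_one_of_one_le_of_nonpos hb (div_nonpos_of_nonpos_of_nonneg (by norm_num)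
      (by linarith))
  have hG' : ∀ α, G α = (α₁ ^ (pm / 2 - 1) * α - α ^ (pm / 2) / (pm / 2)) / 2
      - (max (α ^ (pp / 2)) (α ^ (pm / 2)) - α ^ (pm / 2)) / pm := fun α => by
    rw [hG, hα₁, rpow_rpow_neg_two_div_sub_two (by linarith) hpm]
    field_simp
    ring
  constructor
  · intro x hx y hy hxy
    rw [hG', hG', max_rpow_sub_rpow_eq_zero (by linarith) hx.1 (hx.2.trans hα₁_le_one),
      max_rpow_sub_rpow_eq_zero (by linarith) hy.1 (hy.2.trans hα₁_le_one)]
    have := strictMonoOn_mul_sub_rpow_div (e := pm / 2) (by linarith) (Ioc_subset_Icc_self hx)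
      (Ioc_subset_Icc_self hy) hxy
    linarith
  · intro x hx y hy hxy
    have hx0 : 0 < x := hα₁_pos.trans_le hx
    have hh := strictAntiOn_mul_sub_rpow_div hα₁_pos.le (e := pm / 2) (by linarith) hx hy hxy
    have hφ := monotoneOn_max_rpow_sub_rpow (p := pm / 2) (q := pp / 2) (by linarith)
      (by linarith) hx0 (hx0.trans hxy) hxy.le
    rw [hG', hG']
    have := div_le_div_of_nonneg_right hφ (by linarith : 0 ≤ pm)
    linarith
end

section
/- Let p⁻, p⁺ be real numbers with 2 < p⁻ ≤ p⁺ and let B₁ ≥ 1. Define G : (0, ∞) → ℝ by G(α) = α/(2B₁²) − (1/p⁻)·max{α^{p⁺/2}, α^{p⁻/2}}, and set α₁ = (B₁²)^{−2/(p⁻−2)} and E₁ = (1/2 − 1/p⁻)·α₁^{p⁻/2}. Let α : [0, ∞) → (0, ∞) be continuous and let E : [0, ∞) → ℝ be non-increasing with G(α(t)) ≤ E(t) for all t ≥ 0. Assume E(0) < E₁ and α(0) > α₁. Then there exists α₂ > α₁ with G(α₂) = E(0) and α(t) ≥ α₂ for all t ≥ 0. -/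
/-!
On `[α₁, ∞)` the function `G` is strictly decreasing: at such an `x` the maximum is realised by a
power `x ^ r` with `r > 1` and `(r / pm) * x ^ (r - 1) ≥ 1 / (2 B₁²)` (for `x ≤ 1` this is how `α₁`
is chosen), and by strict convexity of `x ^ r` every secant of `x ^ r / pm` starting at `x` is
steeper still than the linear part. Moreover `G α₁ = E₁`. As `G (α 0) ≤ E 0 < E₁`, the
intermediate value theorem gives `α₂ ∈ (α₁, α 0]` with `G α₂ = E 0`. A value `α t ∈ (α₁, α₂)` would
give `G (α t) > G α₂ = E 0 ≥ E t`, so the connected set `α '' [0, ∞)`, which contains `α 0 > α₁`,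
misses `(α₁, α₂)` and hence lies in `[α₂, ∞)`.
-/

open Set

theorem IsPreconnected.le_of_forall_notMem_Ioo {α : Type*} [LinearOrder α] [TopologicalSpace α]
    [OrderTopology α] [DenselyOrdered α] {s : Set α} (hs : IsPreconnected s) {a b x₀ : α}
    (hx₀ : x₀ ∈ s) (hax₀ : a < x₀) (hab : a < b) (hgap : ∀ x ∈ s, x ∉ Ioo a b) :
    ∀ x ∈ s, b ≤ x := by
  intro x hx
  have hbx₀ : b ≤ x₀ := not_lt.1 fun h => hgap x₀ hx₀ ⟨hax₀, h⟩
  by_contra! hxb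
  have hxa : x ≤ a := not_lt.1 fun h => hgap x hx ⟨h, hxb⟩
  obtain ⟨c, hac, hcb⟩ := exists_between hab
  exact hgap c (hs.Icc_subset hx hx₀ ⟨hxa.trans hac.le, hcb.le.trans hbx₀⟩) ⟨hac, hcb⟩

theorem mul_sub_lt_rpow_sub_rpow {r x y c : ℝ} (hr : 1 < r) (hx : 0 ≤ x) (hxy : x < y)
    (hc : c ≤ r * x ^ (r - 1)) : c * (y - x) < y ^ r - x ^ r := by
  have hslope := (strictConvexOn_rpow hr).lt_slope_of_hasDerivAt hx (hx.trans hxy.le) hxy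
    (Real.hasDerivAt_rpow_const (Or.inr hr.le))
  rw [slope_def_field, lt_div_iff₀ (sub_pos.2 hxy)] at hslope
  exact (mul_le_mul_of_nonneg_right hc (sub_pos.2 hxy).le).trans_lt hslope

theorem rpow_neg_two_div_sub_two_rpow {b p : ℝ} (hb : 0 < b) (hp : p ≠ 2) :
    (b ^ (-2 / (p - 2))) ^ (p / 2 - 1) = b⁻¹ := by
  have : p - 2 ≠ 0 := sub_ne_zero.2 hp
  rw [← Real.rpow_mul hb.le, show -2 / (p - 2) * (p / 2 - 1) = -1 by field_simp,
    Real.rpow_neg_one]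

noncomputable def potentialWell (pm pp b x : ℝ) : ℝ :=
  x / (2 * b) - 1 / pm * max (x ^ (pp / 2)) (x ^ (pm / 2))

section potentialWell

variable {pm pp b : ℝ}

theorem continuous_potentialWell (hpm : 0 ≤ pm) (hpp : 0 ≤ pp) :
    Continuous (potentialWell pm pp b) :=
  (continuous_id.div_const _).sub <| continuous_const.mul <|
    (Real.continuous_rpow_const (by positivity)).max (Real.continuous_rpow_const (by positivity))

theorem potentialWell_rpow_neg_two_div_sub_two (hpm : 2 < pm) (hpmpp : pm ≤ pp) (hb : 1 ≤ b) :
    potentialWell pm pp b (b ^ (-2 / (pm - 2))) =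
      (1 / 2 - 1 / pm) * (b ^ (-2 / (pm - 2))) ^ (pm / 2) := by
  set a := b ^ (-2 / (pm - 2))
  have hb0 : 0 < b := one_pos.trans_le hb
  have ha : 0 < a := Real.rpow_pos_of_pos hb0 _
  have ha1 : a ≤ 1 := Real.rpow_le_one_of_one_le_of_nonpos hb (by
    exact div_nonpos_of_nonpos_of_nonneg (by norm_num) (by linarith))
  have hmax : max (a ^ (pp / 2)) (a ^ (pm / 2)) = a ^ (pm / 2) :=
    max_eq_right (Real.rpow_le_rpow_of_exponent_ge ha ha1 (by linarith))
  have hpow : a ^ (pm / 2) = a / b := by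
    rw [show pm / 2 = 1 + (pm / 2 - 1) by ring, Real.rpow_add ha, Real.rpow_one,
      rpow_neg_two_div_sub_two_rpow hb0 hpm.ne', div_eq_mul_inv]
  rw [potentialWell, hmax, hpow]
  ring

theorem strictAntiOn_potentialWell (hpm : 2 < pm) (hpmpp : pm ≤ pp) (hb : 1 ≤ b) :
    StrictAntiOn (potentialWell pm pp b) (Ici (b ^ (-2 / (pm - 2)))) := by
  set a := b ^ (-2 / (pm - 2))
  have hb0 : 0 < b := one_pos.trans_le hb
  have ha : 0 < a := Real.rpow_pos_of_pos hb0 _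
  intro x hx y hy hxy
  have hx0 : 0 < x := ha.trans_le hx
  set M : ℝ → ℝ := fun z => max (z ^ (pp / 2)) (z ^ (pm / 2))
  obtain ⟨r, hr, hMx, hMy, hc⟩ : ∃ r, 1 < r ∧ M x = x ^ r ∧ y ^ r ≤ M y ∧
      pm / (2 * b) ≤ r * x ^ (r - 1) := by
    rcases le_total x 1 with hx1 | hx1
    · refine ⟨pm / 2, by linarith, max_eq_right ?_, le_max_right _ _, ?_⟩
      · exact Real.rpow_le_rpow_of_exponent_ge hx0 hx1 (by linarith)
      · have : b⁻¹ ≤ x ^ (pm / 2 - 1) := by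
          rw [← rpow_neg_two_div_sub_two_rpow hb0 hpm.ne']
          exact Real.rpow_le_rpow ha.le hx (by linarith)
        rw [div_mul_eq_div_div, div_eq_mul_inv _ b]
        gcongr
    · refine ⟨pp / 2, by linarith, max_eq_left ?_, le_max_left _ _, ?_⟩
      · exact Real.rpow_le_rpow_of_exponent_le hx1 (by linarith)
      · have : 1 ≤ x ^ (pp / 2 - 1) := Real.one_le_rpow hx1 (by linarith)
        calc pm / (2 * b) ≤ pp / 2 := by
              rw [div_le_div_iff₀ (by positivity) two_pos]; nlinarith
          _ ≤ pp / 2 * x ^ (pp / 2 - 1) := le_mul_of_one_le_right (by linarith) this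
  have hgain : (y - x) / (2 * b) < 1 / pm * (M y - M x) := by
    calc (y - x) / (2 * b) = 1 / pm * (pm / (2 * b) * (y - x)) := by field_simp
      _ < 1 / pm * (y ^ r - x ^ r) :=
          mul_lt_mul_of_pos_left (mul_sub_lt_rpow_sub_rpow hr hx0.le hxy hc) (by positivity)
      _ ≤ 1 / pm * (M y - M x) := by gcongr; linarith
  have : potentialWell pm pp b x - potentialWell pm pp b y =
      1 / pm * (M y - M x) - (y - x) / (2 * b) := by
    simp only [potentialWell, M]; ring
  linarith

end potentialWell

theorem lemma32_part1_general (pm pp B₁ α₁ E₁ : ℝ) (G α E : ℝ → ℝ)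
    (hpm : 2 < pm) (hpmpp : pm ≤ pp) (hB₁ : 1 ≤ B₁)
    (hG : ∀ x, G x = x / (2 * B₁ ^ 2) - (1 / pm) * max (x ^ (pp / 2)) (x ^ (pm / 2)))
    (hα₁ : α₁ = (B₁ ^ 2) ^ (-2 / (pm - 2)))
    (hE₁ : E₁ = (1 / 2 - 1 / pm) * α₁ ^ (pm / 2))
    (hα_cont : ContinuousOn α (Set.Ici (0 : ℝ)))
    (hE_anti : ∀ s t, 0 ≤ s → s ≤ t → E t ≤ E s)
    (hGE : ∀ t, 0 ≤ t → G (α t) ≤ E t)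
    (hE0 : E 0 < E₁) (hα0 : α₁ < α 0) :
    ∃ α₂, α₁ < α₂ ∧ G α₂ = E 0 ∧ ∀ t, 0 ≤ t → α₂ ≤ α t := by
  have hB₁sq : 1 ≤ B₁ ^ 2 := one_le_pow₀ hB₁
  have hGwell : G = potentialWell pm pp (B₁ ^ 2) := funext hG
  have hanti : StrictAntiOn G (Ici α₁) :=
    hGwell ▸ hα₁ ▸ strictAntiOn_potentialWell hpm hpmpp hB₁sq
  have hGα₁ : G α₁ = E₁ := by
    rw [hGwell, hE₁, hα₁, potentialWell_rpow_neg_two_div_sub_two hpm hpmpp hB₁sq]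
  have hcont : Continuous G := hGwell ▸ continuous_potentialWell (by linarith) (by linarith)
  obtain ⟨α₂, ⟨hα₁α₂, -⟩, hGα₂⟩ : E 0 ∈ G '' Ioc α₁ (α 0) :=
    intermediate_value_Ioc' hα0.le hcont.continuousOn ⟨hGE 0 le_rfl, hGα₁ ▸ hE0⟩
  refine ⟨α₂, hα₁α₂, hGα₂, fun t ht => ?_⟩
  have hgap : ∀ x ∈ α '' Ici 0, x ∉ Ioo α₁ α₂ := by
    rintro _ ⟨s, hs, rfl⟩ ⟨hα₁s, hsα₂⟩
    have := hanti hα₁s.le hα₁α₂.le hsα₂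
    linarith [hGE s hs, hE_anti 0 s le_rfl hs]
  exact (isPreconnected_Ici.image α hα_cont).le_of_forall_notMem_Ioo
    (mem_image_of_mem α self_mem_Ici) hα0 hα₁α₂ hgap _ (mem_image_of_mem α ht)

/-- Lemma 3.2(1), abstract form: if `α` is continuous and positive on `[0,∞)`, `E` is
non-increasing with `G(α(t)) ≤ E(t)`, `E(0) < E₁` and `α(0) > α₁`, then there exists
`α₂ > α₁` with `G(α₂) = E(0)` and `α(t) ≥ α₂` for all `t ≥ 0`. -/
theorem lemma32_part1 (pm pp B₁ α₁ E₁ : ℝ) (G α E : ℝ → ℝ)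
    (hpm : 2 < pm) (hpmpp : pm ≤ pp) (hB₁ : 1 ≤ B₁)
    (hG : ∀ x, G x = x / (2 * B₁ ^ 2) - (1 / pm) * max (x ^ (pp / 2)) (x ^ (pm / 2)))
    (hα₁ : α₁ = (B₁ ^ 2) ^ (-2 / (pm - 2)))
    (hE₁ : E₁ = (1 / 2 - 1 / pm) * α₁ ^ (pm / 2))
    (hα_cont : ContinuousOn α (Set.Ici (0 : ℝ)))
    (hα_pos : ∀ t, 0 ≤ t → 0 < α t)
    (hE_anti : ∀ s t, 0 ≤ s → s ≤ t → E t ≤ E s)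
    (hGE : ∀ t, 0 ≤ t → G (α t) ≤ E t)
    (hE0 : E 0 < E₁) (hα0 : α₁ < α 0) :
    ∃ α₂, α₁ < α₂ ∧ G α₂ = E 0 ∧ ∀ t, 0 ≤ t → α₂ ≤ α t :=
  lemma32_part1_general pm pp B₁ α₁ E₁ G α E hpm hpmpp hB₁ hG hα₁ hE₁ hα_cont hE_anti hGE hE0 hα0
end

section
/- Let p⁻, p⁺ be real numbers with 2 < p⁻ ≤ p⁺ and let B₁ ≥ 1. Define G : (0, ∞) → ℝ by G(α) = α/(2B₁²) − (1/p⁻)·max{α^{p⁺/2}, α^{p⁻/2}}, and set α₁ = (B₁²)^{−2/(p⁻−2)} and E₁ = (1/2 − 1/p⁻)·α₁^{p⁻/2}. Let α : [0, ∞) → (0, ∞) be continuous and let E : [0, ∞) → ℝ be non-increasing with G(α(t)) ≤ E(t) for all t ≥ 0. Assume 0 < E(0) < E₁ and α(0) < α₁. Then there exists α̃₂ ∈ (0, α₁) with G(α̃₂) = E(0) and α(t) ≤ α̃₂ for all t ≥ 0. -/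
/-- Lemma 3.2(2), abstract form: if `α` is continuous and positive on `[0,∞)`, `E` is
non-increasing with `G(α(t)) ≤ E(t)`, `0 < E(0) < E₁` and `α(0) < α₁`, then there exists
`α̃₂ ∈ (0, α₁)` with `G(α̃₂) = E(0)` and `α(t) ≤ α̃₂` for all `t ≥ 0`. -/
theorem lemma32_part2 (pm pp B₁ α₁ E₁ : ℝ) (G α E : ℝ → ℝ)
    (hpm : 2 < pm) (hpmpp : pm ≤ pp) (hB₁ : 1 ≤ B₁)
    (hG : ∀ x, G x = x / (2 * B₁ ^ 2) - (1 / pm) * max (x ^ (pp / 2)) (x ^ (pm / 2)))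
    (hα₁ : α₁ = (B₁ ^ 2) ^ (-2 / (pm - 2)))
    (hE₁ : E₁ = (1 / 2 - 1 / pm) * α₁ ^ (pm / 2))
    (hα_cont : ContinuousOn α (Set.Ici (0 : ℝ)))
    (hα_pos : ∀ t, 0 ≤ t → 0 < α t)
    (hE_anti : ∀ s t, 0 ≤ s → s ≤ t → E t ≤ E s)
    (hGE : ∀ t, 0 ≤ t → G (α t) ≤ E t)
    (hE0_pos : 0 < E 0) (hE0 : E 0 < E₁) (hα0 : α 0 < α₁) :
    ∃ α₂', α₂' ∈ Set.Ioo 0 α₁ ∧ G α₂' = E 0 ∧ ∀ t, 0 ≤ t → α t ≤ α₂' := by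
  set b : ℝ := B₁ ^ 2 with hbdef
  have hb1 : (1 : ℝ) ≤ b := one_le_pow₀ hB₁
  have hb0 : (0 : ℝ) < b := lt_of_lt_of_le one_pos hb1
  have hpm0 : (0 : ℝ) < pm := by linarith
  have hpm2 : (0 : ℝ) < pm - 2 := by linarith
  have h1le : (1 : ℝ) ≤ pm / 2 := by linarith
  have hα₁pos : 0 < α₁ := by rw [hα₁]; exact Real.rpow_pos_of_pos hb0 _
  have hα₁le1 : α₁ ≤ 1 := by
    rw [hα₁]
    exact Real.rpow_le_one_of_one_le_of_nonpos hb1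
      (div_nonpos_of_nonpos_of_nonneg (by norm_num) hpm2.le)
  -- key exponent identity
  have hkey : α₁ ^ (pm / 2 - 1) = b⁻¹ := by
    rw [hα₁, ← Real.rpow_mul hb0.le]
    have : -2 / (pm - 2) * (pm / 2 - 1) = -1 := by field_simp
    rw [this, Real.rpow_neg_one]
  have hα₁pow : α₁ ^ (pm / 2) = α₁ / b := by
    have : α₁ ^ (pm / 2) = α₁ ^ (1 : ℝ) * α₁ ^ (pm / 2 - 1) := by
      rw [← Real.rpow_add hα₁pos]; ring_nf
    rw [this, Real.rpow_one, hkey]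
    field_simp
  -- the concrete function g
  set g : ℝ → ℝ := fun x => x / (2 * b) - (1 / pm) * x ^ (pm / 2) with hgdef
  have hGg : ∀ x, 0 < x → x ≤ α₁ → G x = g x := by
    intro x hx hx1
    have hxle1 : x ≤ 1 := hx1.trans hα₁le1
    have hmax : max (x ^ (pp / 2)) (x ^ (pm / 2)) = x ^ (pm / 2) := by
      apply max_eq_right
      exact Real.rpow_le_rpow_of_exponent_ge hx hxle1 (by linarith)
    rw [hG, hmax]
  -- derivative of g
  have hderiv : ∀ x : ℝ, HasDerivAt g (1 / (2 * b) - (1 / pm) * (pm / 2 * x ^ (pm / 2 - 1))) x := by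
    intro x
    have h1 : HasDerivAt (fun x : ℝ => x / (2 * b)) (1 / (2 * b)) x := by
      simpa using (hasDerivAt_id x).div_const (2 * b)
    have h2 : HasDerivAt (fun x : ℝ => x ^ (pm / 2)) (pm / 2 * x ^ (pm / 2 - 1)) x :=
      Real.hasDerivAt_rpow_const (Or.inr h1le)
    exact h1.sub (h2.const_mul (1 / pm))
  have hcont : Continuous g := by
    have : Differentiable ℝ g := fun x => (hderiv x).differentiableAt
    exact this.continuous
  -- g is strictly monotone on [0, α₁]
  have hmono : StrictMonoOn g (Set.Icc 0 α₁) := by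
    apply strictMonoOn_of_deriv_pos (convex_Icc 0 α₁) hcont.continuousOn
    intro x hx
    rw [interior_Icc] at hx
    rw [(hderiv x).deriv]
    have hxc : x ^ (pm / 2 - 1) < α₁ ^ (pm / 2 - 1) :=
      Real.rpow_lt_rpow hx.1.le hx.2 (by linarith)
    rw [hkey] at hxc
    have : (1 / pm) * (pm / 2 * x ^ (pm / 2 - 1)) = x ^ (pm / 2 - 1) / 2 := by
      field_simp
    rw [this]
    have : x ^ (pm / 2 - 1) / 2 < b⁻¹ / 2 := by linarith
    have hinv : b⁻¹ / 2 = 1 / (2 * b) := by rw [inv_eq_one_div, div_div, mul_comm]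
    linarith [hinv ▸ this]
  have hgα₁ : g α₁ = E₁ := by
    rw [hgdef]; simp only
    rw [hα₁pow, hE₁, hα₁pow]
    field_simp
  -- pick a small starting point x₀
  set x₀ : ℝ := min (b * E 0) α₁ with hx₀def
  have hx₀pos : 0 < x₀ := lt_min (mul_pos hb0 hE0_pos) hα₁pos
  have hx₀le : x₀ ≤ α₁ := min_le_right _ _
  have hgx₀ : g x₀ < E 0 := by
    have h1 : g x₀ ≤ x₀ / (2 * b) := by
      have : 0 ≤ (1 / pm) * x₀ ^ (pm / 2) :=
        mul_nonneg (by positivity) (Real.rpow_nonneg hx₀pos.le _)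
      simp only [hgdef]; linarith
    have h2 : x₀ / (2 * b) ≤ (b * E 0) / (2 * b) := by
      gcongr
      exact min_le_left _ _
    have h3 : (b * E 0) / (2 * b) = E 0 / 2 := by
      rw [mul_comm 2 b, ← div_div, mul_div_cancel_left₀ _ hb0.ne']
    exact lt_of_le_of_lt (h1.trans (h2.trans_eq h3)) (by linarith)
  -- IVT for g
  have hIVT := intermediate_value_Icc hx₀le (hcont.continuousOn (s := Set.Icc x₀ α₁))
  have hmem : E 0 ∈ Set.Icc (g x₀) (g α₁) := ⟨hgx₀.le, by rw [hgα₁]; exact hE0.le⟩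
  obtain ⟨α₂', hα₂mem, hα₂eq⟩ := hIVT hmem
  have hα₂pos : 0 < α₂' := lt_of_lt_of_le hx₀pos hα₂mem.1
  have hα₂lt : α₂' < α₁ := by
    rcases lt_or_eq_of_le hα₂mem.2 with h | h
    · exact h
    · exfalso; rw [h, hgα₁] at hα₂eq; linarith
  refine ⟨α₂', ⟨hα₂pos, hα₂lt⟩, by rw [hGg α₂' hα₂pos hα₂lt.le]; exact hα₂eq, ?_⟩
  -- α 0 ≤ α₂'
  have hα0pos : 0 < α 0 := hα_pos 0 le_rfl
  have hα0le : α 0 ≤ α₂' := by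
    by_contra h
    push_neg at h
    have h1 : g α₂' < g (α 0) :=
      hmono ⟨hα₂pos.le, hα₂lt.le⟩ ⟨hα0pos.le, hα0.le⟩ h
    have h2 : g (α 0) ≤ E 0 := by
      rw [← hGg (α 0) hα0pos hα0.le]; exact hGE 0 le_rfl
    rw [hα₂eq] at h1; linarith
  -- main claim
  intro t ht
  by_contra h
  push_neg at h
  set c : ℝ := (α₂' + min (α t) α₁) / 2 with hcdef
  have hc1 : α₂' < c := by
    have : α₂' < min (α t) α₁ := lt_min h hα₂lt
    simp only [hcdef]; linarith
  have hc2 : c < α t := by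
    have : min (α t) α₁ ≤ α t := min_le_left _ _
    have h2 : α₂' < min (α t) α₁ := lt_min h hα₂lt
    simp only [hcdef]; linarith
  have hc3 : c < α₁ := by
    have : min (α t) α₁ ≤ α₁ := min_le_right _ _
    have h2 : α₂' < min (α t) α₁ := lt_min h hα₂lt
    simp only [hcdef]; linarith
  have hcpos : 0 < c := hα₂pos.trans hc1
  -- IVT for α on [0, t]
  have hsub : Set.Icc (0 : ℝ) t ⊆ Set.Ici 0 := fun x hx => hx.1
  have hIVT2 := intermediate_value_Icc ht (hα_cont.mono hsub)
  have hcmem : c ∈ Set.Icc (α 0) (α t) := ⟨(hα0le.trans hc1.le), hc2.le⟩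
  obtain ⟨s, hsmem, hseq⟩ := hIVT2 hcmem
  have hgc : g α₂' < g c :=
    hmono ⟨hα₂pos.le, hα₂lt.le⟩ ⟨hcpos.le, hc3.le⟩ hc1
  have hEs : g c ≤ E s := by
    rw [← hseq, ← hGg (α s) (hα_pos s hsmem.1) (by rw [hseq]; exact hc3.le)]
    exact hGE s hsmem.1
  have : E s ≤ E 0 := hE_anti 0 s le_rfl hsmem.1
  rw [hα₂eq] at hgc
  linarith
end

section
/- Let q > 2, K₁ > 0, K₂ > 0 and T* > 0. Suppose R : [0, T*) → [0, ∞) is differentiable with R'(t) ≤ K₁·R(t)^{q−1} + K₂ for all t ∈ [0, T*), and R(t) → +∞ as t → T*⁻. Then ∫_{R(0)}^{+∞} dy/(K₁·y^{q−1} + K₂) ≤ T*. -/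
open MeasureTheory

/-- Lower bound for the blow-up time: if `R ≥ 0` satisfies `R' ≤ K₁ R^{q−1} + K₂` on
`[0, T*)` and `R(t) → +∞` as `t → T*⁻`, then `∫_{R(0)}^{∞} dy/(K₁ y^{q−1} + K₂) ≤ T*`. -/
theorem blowup_time_lower_bound (q K₁ K₂ Tstar : ℝ)
    (hq : 2 < q) (hK₁ : 0 < K₁) (hK₂ : 0 < K₂) (hT : 0 < Tstar) (R : ℝ → ℝ)
    (hR_nonneg : ∀ t ∈ Set.Ico 0 Tstar, 0 ≤ R t)
    (hdiff : ∀ t ∈ Set.Ico 0 Tstar, DifferentiableAt ℝ R t)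
    (hineq : ∀ t ∈ Set.Ico 0 Tstar, deriv R t ≤ K₁ * (R t) ^ (q - 1) + K₂)
    (hblow : Filter.Tendsto R (nhdsWithin Tstar (Set.Iio Tstar)) Filter.atTop) :
    ∫ y in Set.Ioi (R 0), 1 / (K₁ * y ^ (q - 1) + K₂) ≤ Tstar := by
  set g : ℝ → ℝ := fun y => 1 / (K₁ * y ^ (q - 1) + K₂) with hg_def
  have hR0 : 0 ≤ R 0 := hR_nonneg 0 ⟨le_refl 0, hT⟩
  -- denominator positive for y ≥ 0
  have hden_pos : ∀ y : ℝ, 0 ≤ y → 0 < K₁ * y ^ (q - 1) + K₂ := by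
    intro y hy
    have : 0 ≤ y ^ (q - 1) := Real.rpow_nonneg hy _
    nlinarith
  -- g is continuous at every y ≥ 0
  have hg_cont : ∀ y : ℝ, 0 ≤ y → ContinuousAt g y := by
    intro y hy
    have h1 : ContinuousAt (fun z : ℝ => K₁ * z ^ (q - 1) + K₂) y := by
      have := Real.continuousAt_rpow_const y (q - 1) (Or.inr (by linarith))
      exact (continuousAt_const.mul this).add continuousAt_const
    exact continuousAt_const.div h1 (ne_of_gt (hden_pos y hy))
  have hg_meas : Measurable g := by
    have : Measurable fun z : ℝ => K₁ * z ^ (q - 1) + K₂ :=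
      ((measurable_id.pow_const (q - 1)).const_mul K₁).add_const K₂
    exact measurable_one.div this
  -- integrability on Ioi (R 0)
  have hg_nonneg : ∀ y : ℝ, 0 ≤ y → 0 ≤ g y := fun y hy =>
    le_of_lt (div_pos one_pos (hden_pos y hy))
  have hint : IntegrableOn g (Set.Ioi (R 0)) := by
    have hc : (0:ℝ) < max (R 0) 1 := lt_of_lt_of_le one_pos (le_max_right _ _)
    have h1 : IntegrableOn g (Set.Ioc (R 0) (max (R 0) 1)) := by
      apply (ContinuousOn.integrableOn_compact isCompact_Icc ?_).mono_set Set.Ioc_subset_Icc_self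
      intro y hy
      exact (hg_cont y (le_trans hR0 hy.1)).continuousWithinAt
    have h2 : IntegrableOn g (Set.Ioi (max (R 0) 1)) := by
      have hbase : IntegrableOn (fun y : ℝ => K₁⁻¹ * y ^ (1 - q)) (Set.Ioi (max (R 0) 1)) :=
        (integrableOn_Ioi_rpow_of_lt (by linarith) hc).const_mul _
      refine hbase.mono' (hg_meas.aestronglyMeasurable.restrict) ?_
      filter_upwards [ae_restrict_mem measurableSet_Ioi] with y hy
      have hy1 : (1:ℝ) ≤ y := le_of_lt (lt_of_le_of_lt (le_max_right _ _) hy)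
      have hy0 : (0:ℝ) < y := lt_of_lt_of_le one_pos hy1
      have hpow : 0 < y ^ (q - 1) := Real.rpow_pos_of_pos hy0 _
      rw [Real.norm_of_nonneg (hg_nonneg y hy0.le)]
      have : g y ≤ 1 / (K₁ * y ^ (q - 1)) := by
        apply div_le_div_of_nonneg_left one_pos.le (by positivity)
        nlinarith
      refine this.trans (le_of_eq ?_)
      rw [one_div, mul_inv, ← Real.rpow_neg hy0.le, neg_sub]
    have := h1.union h2
    rwa [Set.Ioc_union_Ioi_eq_Ioi (le_max_left _ _)] at this
  -- key estimate: for t ∈ [0, T*), ∫_{R 0}^{R t} g ≤ t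
  set H : ℝ → ℝ := fun t => ∫ y in (R 0)..(R t), g y with hH_def
  have hHderiv : ∀ t ∈ Set.Ico 0 Tstar,
      HasDerivAt H (g (R t) * deriv R t) t := by
    intro t ht
    have hRt : 0 ≤ R t := hR_nonneg t ht
    have hii : IntervalIntegrable g volume (R 0) (R t) := by
      apply ContinuousOn.intervalIntegrable
      intro y hy
      have : 0 ≤ y := le_trans (le_min hR0 hRt) hy.1
      exact (hg_cont y this).continuousWithinAt
    have hmeas : StronglyMeasurableAtFilter g (nhds (R t)) volume :=
      ⟨Set.univ, Filter.univ_mem, hg_meas.stronglyMeasurable.aestronglyMeasurable.restrict⟩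
    have hF : HasDerivAt (fun u => ∫ y in (R 0)..u, g y) (g (R t)) (R t) :=
      intervalIntegral.integral_hasDerivAt_right hii hmeas (hg_cont _ hRt)
    exact hF.comp t (hdiff t ht).hasDerivAt
  have hHle : ∀ t ∈ Set.Ico 0 Tstar, H t ≤ t := by
    intro t ht
    have hmono : MonotoneOn (fun s => s - H s) (Set.Icc 0 t) := by
      have hsub : Set.Icc 0 t ⊆ Set.Ico 0 Tstar := fun s hs =>
        ⟨hs.1, lt_of_le_of_lt hs.2 ht.2⟩
      have hdiffG : ∀ s ∈ Set.Icc 0 t, HasDerivAt (fun s => s - H s)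
          (1 - g (R s) * deriv R s) s := fun s hs =>
        (hasDerivAt_id s).sub (hHderiv s (hsub hs))
      apply monotoneOn_of_deriv_nonneg (convex_Icc 0 t)
      · intro s hs
        exact (hdiffG s hs).continuousAt.continuousWithinAt
      · intro s hs
        exact (hdiffG s (interior_subset hs)).differentiableAt.differentiableWithinAt
      · intro s hs
        have hs' := interior_subset hs
        rw [(hdiffG s hs').deriv]
        have hRs : 0 ≤ R s := hR_nonneg s (hsub hs')
        have hdp := hden_pos (R s) hRs
        have hgRs : g (R s) = (K₁ * (R s) ^ (q - 1) + K₂)⁻¹ := one_div _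
        have : g (R s) * deriv R s ≤ g (R s) * (K₁ * (R s) ^ (q - 1) + K₂) :=
          mul_le_mul_of_nonneg_left (hineq s (hsub hs')) (hg_nonneg _ hRs)
        rw [hgRs, inv_mul_cancel₀ (ne_of_gt hdp)] at this
        rw [hgRs]
        linarith
    have := hmono ⟨le_refl 0, ht.1⟩ ⟨ht.1, le_refl t⟩ ht.1
    have hH0 : H 0 = 0 := by simp [hH_def]
    simp only [hH0, sub_zero] at this
    linarith
  -- pass to the limit t → T*⁻
  have hIlim : Filter.Tendsto (fun x => ∫ y in (R 0)..x, g y) Filter.atTop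
      (nhds (∫ y in Set.Ioi (R 0), g y)) :=
    intervalIntegral_tendsto_integral_Ioi (R 0) hint Filter.tendsto_id
  have hcomp : Filter.Tendsto H (nhdsWithin Tstar (Set.Iio Tstar))
      (nhds (∫ y in Set.Ioi (R 0), g y)) := hIlim.comp hblow
  have hfinal : ∫ y in Set.Ioi (R 0), g y ≤ Tstar := by
    refine le_of_tendsto hcomp ?_
    have h1 : Set.Ioi (0:ℝ) ∈ nhds Tstar := isOpen_Ioi.mem_nhds hT
    have hmem : Set.Ico 0 Tstar ∈ nhdsWithin Tstar (Set.Iio Tstar) :=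
      Filter.mem_of_superset
        (Filter.inter_mem (mem_nhdsWithin_of_mem_nhds h1) self_mem_nhdsWithin)
        (fun t ht => ⟨le_of_lt ht.1, ht.2⟩)
    filter_upwards [hmem] with t ht
    exact (hHle t ht).trans (le_of_lt ht.2)
  exact hfinal
end
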